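/- The fiber counts of the insertion map B satisfy the following recursion: f(empty tree) = 1, and if T is a nonempty binary tree with multiplicities with root multiplicity k, left subtree L of size l and right subtree R of size r (so |T| = n = k + l + r), then f(T) = ((n−1)! / ((k−1)!·l!·r!)) · f(L) · f(R), where f(T) is the number of packed words w with B(w) = T. -/

import Mathlib

open scoped Classical

/-- Words over the positive integers. -/
abbrev Word : Type := List ℕ+

/-- Evaluation of a word: number of occurrences of each letter. -/
def ev (w : Word) : ℕ+ → ℕ := fun a => w.count a

/-- A monoid congruence on the free monoid `(ℕ⁺)*`. -/
def IsCongruence (r : Word → Word → Prop) : Prop :=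
  Equivalence r ∧ ∀ u v u' v', r u v → r u' v' → r (u ++ u') (v ++ v')

/-- Restriction of a word to the letters belonging to a set `I`. -/
noncomputable def restrictTo (I : Set ℕ+) (w : Word) : Word :=
  w.filter fun a => decide (a ∈ I)

/-- `I` is an interval (order-convex subset) of `ℕ⁺`. -/
def IsIntervalSet (I : Set ℕ+) : Prop :=
  ∀ ⦃a b c : ℕ+⦄, a ∈ I → c ∈ I → a ≤ b → b ≤ c → b ∈ I

/-- Compatibility with restriction to alphabet intervals. -/
def CompatRestrict (r : Word → Word → Prop) : Prop :=
  ∀ I : Set ℕ+, IsIntervalSet I → ∀ u v, r u v → r (restrictTo I u) (restrictTo I v)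

/-- `r` is a `φ`-congruence. -/
def IsPhiCongruence (φ : Word → Word) (r : Word → Word → Prop) : Prop :=
  ∀ u v, r u v ↔ (r (φ u) (φ v) ∧ ev u = ev v)

/-- Standardization. -/
def std (w : Word) : Word :=
  (List.range w.length).map fun i =>
    ⟨((List.range w.length).countP fun j =>
        decide (w.getD j 1 < w.getD i 1 ∨ (w.getD j 1 = w.getD i 1 ∧ j < i))) + 1,
      Nat.succ_pos _⟩

/-- Packing. -/
def pack (w : Word) : Word :=
  w.map fun a => ⟨(w.dedup.countP fun b => decide (b < a)) + 1, Nat.succ_pos _⟩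

theorem parkBad_ex (w : Word) :
    ∃ d : ℕ, 1 ≤ d ∧ (w.countP fun a : ℕ+ => decide ((a : ℕ) ≤ d)) < d :=
  ⟨w.length + 1, Nat.succ_le_succ (Nat.zero_le _), by
    have h : (w.countP fun a : ℕ+ => decide ((a : ℕ) ≤ w.length + 1)) ≤ w.length :=
      List.countP_le_length
    omega⟩

/-- The smallest `d ≥ 1` such that fewer than `d` letters of `w` are `≤ d`. -/
noncomputable def parkBad (w : Word) : ℕ := Nat.find (parkBad_ex w)

/-- One pass of the parkization procedure, with fuel. -/
noncomputable def parkAux : ℕ → Word → Word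
  | 0, w => w
  | f + 1, w =>
    if parkBad w ≤ w.length then
      parkAux f (w.map fun a : ℕ+ => if parkBad w < (a : ℕ) then (a - 1 : ℕ+) else a)
    else w

/-- Parkization. The fuel `(sum of the letters)` always suffices,
since every pass strictly decreases the sum of the letters. -/
noncomputable def park (w : Word) : Word := parkAux (w.map fun a => (a : ℕ)).sum w

/-- Smallest monoid congruence containing `base`. -/
def CongClosure (base : Word → Word → Prop) (u v : Word) : Prop :=
  ∀ r : Word → Word → Prop, IsCongruence r → (∀ x y, base x y → r x y) → r u v

def sylvBase (x y : Word) : Prop :=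
  ∃ (a b c : ℕ+) (v : Word), a ≤ b ∧ b < c ∧
    x = a :: c :: (v ++ [b]) ∧ y = c :: a :: (v ++ [b])

/-- The sylvester congruence. -/
def sylv : Word → Word → Prop := CongClosure sylvBase

def stalBase (x y : Word) : Prop :=
  ∃ (a b : ℕ+) (v : Word), x = b :: a :: (v ++ [b]) ∧ y = a :: b :: (v ++ [b])

/-- The stalactic congruence. -/
def stal : Word → Word → Prop := CongClosure stalBase

def sylvSharpBase (x y : Word) : Prop :=
  ∃ (a b c : ℕ+) (v : Word), a < b ∧ b ≤ c ∧
    x = b :: (v ++ [a, c]) ∧ y = b :: (v ++ [c, a])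

/-- The #-sylvester congruence. -/
def sylvSharp : Word → Word → Prop := CongClosure sylvSharpBase

/-- The taïga congruence: join of the sylvester and stalactic congruences. -/
def taiga : Word → Word → Prop := CongClosure fun u v => sylv u v ∨ stal u v

/-- Planar binary trees with letter labels. -/
inductive BT : Type where
  | leaf : BT
  | node : BT → ℕ+ → BT → BT
deriving DecidableEq

/-- Binary search tree insertion of a letter. -/
def BT.insert : BT → ℕ+ → BT
  | .leaf, l => .node .leaf l .leaf
  | .node L b R, l => if l ≤ b then .node (L.insert l) b R else .node L b (R.insert l)

/-- Binary search tree of a word: insert the letters from right to left. -/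
def bst (w : Word) : BT := w.foldr (fun l t => t.insert l) .leaf

/-- Planar binary trees labelled by a letter and a multiplicity. -/
inductive BSTM : Type where
  | leaf : BSTM
  | node : BSTM → ℕ+ → ℕ+ → BSTM → BSTM   -- left, letter, multiplicity, right
deriving DecidableEq

/-- Insertion of a letter into a binary search tree with multiplicities. -/
def BSTM.insert : BSTM → ℕ+ → BSTM
  | .leaf, l => .node .leaf l 1 .leaf
  | .node L l' k R, l =>
    if l = l' then .node L l' (k + 1) R
    else if l < l' then .node (L.insert l) l' k R
    else .node L l' k (R.insert l)

/-- The `P`-symbol: insert the letters of `w` from right to left. -/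
def Pmap (w : Word) : BSTM := w.foldr (fun l t => t.insert l) .leaf

/-- Letters of a BSTM in left-to-right (infix) order. -/
def BSTM.letters : BSTM → List ℕ+
  | .leaf => []
  | .node L l _ R => L.letters ++ l :: R.letters

/-- The binary search tree property for a BSTM. -/
def BSTM.IsSearchTree : BSTM → Prop
  | .leaf => True
  | .node L l _ R =>
      (∀ x ∈ L.letters, x < l) ∧ (∀ x ∈ R.letters, l < x) ∧
        L.IsSearchTree ∧ R.IsSearchTree

/-- Total multiplicity of a letter in a BSTM. -/
def BSTM.mult : BSTM → ℕ+ → ℕ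
  | .leaf, _ => 0
  | .node L l k R, a => L.mult a + (if a = l then (k : ℕ) else 0) + R.mult a

/-- Size of a BSTM: sum of the multiplicities. -/
def BSTM.size : BSTM → ℕ
  | .leaf => 0
  | .node L _ k R => L.size + (k : ℕ) + R.size

/-- Planar binary trees with multiplicities. -/
inductive BTM : Type where
  | leaf : BTM
  | node : BTM → ℕ+ → BTM → BTM
deriving DecidableEq

/-- Size of a BTM: sum of the multiplicities. -/
def BTM.size : BTM → ℕ
  | .leaf => 0
  | .node L k R => L.size + (k : ℕ) + R.size

/-- Number of nodes of a BTM. -/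
def BTM.numNodes : BTM → ℕ
  | .leaf => 0
  | .node L _ R => L.numNodes + 1 + R.numNodes

/-- Forgetting the letters of a BSTM gives a BTM. -/
def forgetLetters : BSTM → BTM
  | .leaf => .leaf
  | .node L _ k R => .node (forgetLetters L) k (forgetLetters R)

/-- The `B`-symbol: the BTM underlying `P(w)`. -/
def Bmap (w : Word) : BTM := forgetLetters (Pmap w)

/-- A packed word: its set of letters is `{1, …, k}` for some `k`. -/
def IsPacked (w : Word) : Prop := ∀ a ∈ w, ∀ b : ℕ+, b ≤ a → b ∈ w

/-- Number of packed words inserting to the BTM `T`. -/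
noncomputable def fT (T : BTM) : ℕ :=
  Set.ncard {w : Word | IsPacked w ∧ Bmap w = T}

/-- The hook-type product over the subtrees of a BTM. -/
def hookProd : BTM → ℕ
  | .leaf => 1
  | .node L k R =>
      (BTM.node L k R).size * ((k : ℕ) - 1).factorial * hookProd L * hookProd R

/-- Label the nodes of a BTM in infix order starting from a given letter;
returns the labelled tree and the next unused letter. -/
def infixLabelAux : BTM → ℕ+ → BSTM × ℕ+
  | .leaf, n => (.leaf, n)
  | .node L k R, n =>
    let p := infixLabelAux L n
    let q := infixLabelAux R (p.2 + 1)
    (.node p.1 p.2 k q.1, q.2)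

/-- Label the nodes of a BTM by `1, …, k` in infix order. -/
def infixLabel (T : BTM) : BSTM := (infixLabelAux T 1).1

/-!
The last letter `a` of a word `w` is the root of `P(w)`. Writing `w = w' a`, the letters of `w'`
below `a` insert into the left subtree and those above `a` into the right subtree, while the other
copies of `a` only raise the root multiplicity. If `w` is packed, its letters below `a` are exactly
`1, …, a - 1`, so they form a packed word `u` with `B(u) = L`, and the letters above `a`, lowered
by `a`, form a packed word `v` with `B(v) = R`. The word `w'` is recovered from `u`, `v` and the
word over `{<, =, >}` recording how each letter of `w'` compares with `a`; conversely every triple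
is realised, with `a = 1 + max u`. There are `(n-1)! / ((k-1)! l! r!)` such comparison words.
-/

open Nat

theorem List.ncard_eq_sum_ncard_cons {α : Type*} [Fintype α] {S : Set (List α)} (hS : S.Finite)
    (hnil : [] ∉ S) : S.ncard = ∑ i, {t | i :: t ∈ S}.ncard := by
  have hS_eq : S = ⋃ i, List.cons i '' {t | i :: t ∈ S} := by
    ext (_ | ⟨i, t⟩) <;> simp [hnil]
  calc S.ncard = (⋃ i, List.cons i '' {t | i :: t ∈ S}).ncard := by rw [← hS_eq]
    _ = ∑ i, {t | i :: t ∈ S}.ncard := by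
      rw [Set.ncard_iUnion_of_finite, finsum_eq_sum_of_fintype]
      · simp_rw [Set.ncard_image_of_injective _ List.cons_injective]
      · exact fun i => hS.subset (by rintro _ ⟨t, ht, rfl⟩; exact ht)
      · intro i j hij
        simp only [Function.onFun, Set.disjoint_left]
        rintro _ ⟨t, -, rfl⟩ ⟨s, -, h⟩
        exact hij (List.cons_eq_cons.mp h).1.symm

section ListsWithCount

variable {α : Type*} [DecidableEq α]

def listsWithCount (f : α → ℕ) : Set (List α) := {c | ∀ i, c.count i = f i}

theorem listsWithCount_cons_of_eq_succ {f : α → ℕ} {i : α} {m : ℕ} (hfi : f i = m + 1) :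
    {t | i :: t ∈ listsWithCount f} = listsWithCount (Function.update f i m) := by
  ext t
  simp only [listsWithCount, Set.mem_ofPred_eq, List.count_cons, beq_iff_eq]
  refine forall_congr' fun j => ?_
  by_cases hj : j = i
  · subst hj; simp [hfi]
  · simp [hj, Ne.symm hj]

theorem listsWithCount_cons_of_eq_zero {f : α → ℕ} {i : α} (hfi : f i = 0) :
    {t | i :: t ∈ listsWithCount f} = ∅ :=
  Set.eq_empty_of_forall_notMem fun t ht => by simpa [hfi] using ht i

variable [Fintype α]

theorem length_eq_sum_of_mem_listsWithCount {f : α → ℕ} {c : List α}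
    (hc : c ∈ listsWithCount f) : c.length = ∑ i, f i := by
  rw [← Multiset.coe_card, ← Multiset.sum_count_eq_card (s := Finset.univ) (by simp)]
  exact Finset.sum_congr rfl fun i _ => (Multiset.coe_count i c).trans (hc i)

theorem listsWithCount_finite (f : α → ℕ) : (listsWithCount f).Finite :=
  (List.finite_length_eq α (∑ i, f i)).subset fun _ hc => length_eq_sum_of_mem_listsWithCount hc

theorem ncard_listsWithCount_mul_prod_factorial (f : α → ℕ) :
    (listsWithCount f).ncard * ∏ i, (f i)! = (∑ i, f i)! := by
  induction hn : ∑ i, f i generalizing f with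
  | zero =>
    have hf : ∀ i, f i = 0 := by simpa [Finset.sum_eq_zero_iff] using hn
    have hS : listsWithCount f = {[]} := by
      ext c
      simp only [Set.mem_singleton_iff, ← List.length_eq_zero_iff]
      refine ⟨fun hc => (length_eq_sum_of_mem_listsWithCount hc).trans hn, fun hc i => ?_⟩
      simp [List.length_eq_zero_iff.mp hc, hf]
    simp [hS, hf]
  | succ n ih =>
    have hnil : [] ∉ listsWithCount f := fun h => by
      simpa [hn] using length_eq_sum_of_mem_listsWithCount h
    rw [List.ncard_eq_sum_ncard_cons (listsWithCount_finite f) hnil, Finset.sum_mul]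
    calc ∑ i, {t | i :: t ∈ listsWithCount f}.ncard * ∏ j, (f j)!
        = ∑ i, f i * n ! := Finset.sum_congr rfl fun i _ => ?_
      _ = (n + 1)! := by rw [← Finset.sum_mul, hn, Nat.factorial_succ]
    rcases hfi : f i with _ | m
    · simp [listsWithCount_cons_of_eq_zero hfi]
    · have hrest : ∀ j ∈ Finset.univ.erase i, Function.update f i m j = f j :=
        fun j hj => Function.update_of_ne (Finset.ne_of_mem_erase hj) _ _
      have hsum : ∑ j, Function.update f i m j = n := by
        rw [← Finset.add_sum_erase _ _ (Finset.mem_univ i), Finset.sum_congr rfl hrest]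
        rw [← Finset.add_sum_erase _ _ (Finset.mem_univ i), hfi] at hn
        simp only [Function.update_self]
        linarith
      have hprod : ∏ j, (f j)! = (m + 1) * ∏ j, (Function.update f i m j)! := by
        rw [← Finset.mul_prod_erase _ _ (Finset.mem_univ i),
          ← Finset.mul_prod_erase _ _ (Finset.mem_univ i),
          Finset.prod_congr rfl fun j hj => congrArg Nat.factorial (hrest j hj),
          Function.update_self, hfi, Nat.factorial_succ, mul_assoc]
      rw [listsWithCount_cons_of_eq_succ hfi, hprod, ← ih _ hsum]
      ring

end ListsWithCount

@[to_additive]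
theorem Ordering.prod_univ {M : Type*} [CommMonoid M] (f : Ordering → M) :
    ∏ o, f o = f .lt * f .eq * f .gt := by
  rw [show (Finset.univ : Finset Ordering) = {.lt, .eq, .gt} from rfl]
  simp [mul_assoc]

def orderingCounts (l e g : ℕ) : Ordering → ℕ
  | .lt => l
  | .eq => e
  | .gt => g

section MergeAround

variable {α : Type*} [LinearOrder α]

-- The `headD` defaults are never reached once `c` has as many `.lt` (`.gt`) as `u` (`v`) has letters.
def mergeAround (a : α) : List Ordering → List α → List α → List α
  | [], _, _ => []
  | .lt :: c, u, v => u.headD a :: mergeAround a c u.tail v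
  | .eq :: c, u, v => a :: mergeAround a c u v
  | .gt :: c, u, v => v.headD a :: mergeAround a c u v.tail

theorem mergeAround_map_compare_filter (a : α) (w : List α) :
    mergeAround a (w.map (compare · a)) (w.filter (· < a)) (w.filter (a < ·)) = w := by
  induction w with
  | nil => rfl
  | cons x w ih =>
    rcases lt_trichotomy x a with h | rfl | h
    · simp [compare_lt_iff_lt.mpr h, h, h.not_gt, mergeAround, ih]
    · simp [mergeAround, ih]
    · simp [compare_gt_iff_gt.mpr h, h, h.not_gt, mergeAround, ih]

theorem mergeAround_spec {a : α} {c : List Ordering} {u v : List α}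
    (hu : ∀ x ∈ u, x < a) (hv : ∀ y ∈ v, a < y)
    (hcu : c.count .lt = u.length) (hcv : c.count .gt = v.length) :
    (mergeAround a c u v).map (compare · a) = c ∧
      (mergeAround a c u v).filter (· < a) = u ∧ (mergeAround a c u v).filter (a < ·) = v := by
  induction c generalizing u v with
  | nil =>
    obtain rfl : u = [] := List.eq_nil_of_length_eq_zero hcu.symm
    obtain rfl : v = [] := List.eq_nil_of_length_eq_zero hcv.symm
    simp [mergeAround]
  | cons o c ih =>
    cases o with
    | lt =>
      obtain ⟨x, u, rfl⟩ := List.exists_cons_of_length_pos (by simp at hcu; omega : 0 < u.length)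
      have hx := hu x (by simp)
      obtain ⟨h1, h2, h3⟩ := ih (fun y hy => hu y (List.mem_cons_of_mem x hy)) hv
        (by simpa using hcu) (by simpa using hcv)
      simp [mergeAround, h1, h2, h3, hx, hx.not_gt, compare_lt_iff_lt.mpr hx]
    | eq =>
      obtain ⟨h1, h2, h3⟩ := ih hu hv (by simpa using hcu) (by simpa using hcv)
      simp [mergeAround, h1, h2, h3]
    | gt =>
      obtain ⟨y, v, rfl⟩ := List.exists_cons_of_length_pos (by simp at hcv; omega : 0 < v.length)
      have hy := hv y (by simp)
      obtain ⟨h1, h2, h3⟩ := ih hu (fun z hz => hv z (List.mem_cons_of_mem y hz))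
        (by simpa using hcu) (by simpa using hcv)
      simp [mergeAround, h1, h2, h3, hy, hy.not_gt, compare_gt_iff_gt.mpr hy]

theorem count_map_compare (a : α) (w : List α) :
    (w.map (compare · a)).count .lt = (w.filter (· < a)).length ∧
      (w.map (compare · a)).count .eq = w.count a ∧
      (w.map (compare · a)).count .gt = (w.filter (a < ·)).length := by
  induction w with
  | nil => simp
  | cons x w ih =>
    rcases lt_trichotomy x a with h | rfl | h
    · simp [compare_lt_iff_lt.mpr h, h, h.not_gt, h.ne, ih]
    · simp [ih]
    · simp [compare_gt_iff_gt.mpr h, h, h.not_gt, h.ne', ih]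

end MergeAround

namespace BSTM

def mapLetters (f : ℕ+ → ℕ+) : BSTM → BSTM
  | .leaf => .leaf
  | .node L x k R => .node (L.mapLetters f) (f x) k (R.mapLetters f)

theorem mapLetters_insert {f : ℕ+ → ℕ+} (hf : StrictMono f) (t : BSTM) (x : ℕ+) :
    (t.insert x).mapLetters f = (t.mapLetters f).insert (f x) := by
  induction t with
  | leaf => rfl
  | node L y k R ihL ihR =>
    rcases lt_trichotomy x y with h | rfl | h
    · simp [insert, mapLetters, h, h.ne, hf h, (hf h).ne, ihL]
    · simp [insert, mapLetters]
    · simp [insert, mapLetters, h.ne', h.not_gt, (hf h).ne', (hf h).not_gt, ihR]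

theorem forgetLetters_mapLetters (f : ℕ+ → ℕ+) (t : BSTM) :
    forgetLetters (t.mapLetters f) = forgetLetters t := by
  induction t with
  | leaf => rfl
  | node L x k R ihL ihR => simp [mapLetters, forgetLetters, ihL, ihR]

theorem size_insert (t : BSTM) (x : ℕ+) : (t.insert x).size = t.size + 1 := by
  induction t with
  | leaf => rfl
  | node L y k R ihL ihR =>
    simp only [insert]
    split_ifs <;> simp [size, ihL, ihR, PNat.add_coe] <;> omega

end BSTM

theorem pmap_cons (x : ℕ+) (w : Word) : Pmap (x :: w) = (Pmap w).insert x := rfl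

theorem pmap_map {f : ℕ+ → ℕ+} (hf : StrictMono f) (w : Word) :
    Pmap (w.map f) = (Pmap w).mapLetters f := by
  induction w with
  | nil => rfl
  | cons x w ih => rw [List.map_cons, pmap_cons, pmap_cons, ih, BSTM.mapLetters_insert hf]

theorem bmap_map {f : ℕ+ → ℕ+} (hf : StrictMono f) (w : Word) : Bmap (w.map f) = Bmap w := by
  rw [Bmap, Bmap, pmap_map hf, BSTM.forgetLetters_mapLetters]

theorem size_bmap (w : Word) : (Bmap w).size = w.length := by
  suffices ∀ t : BSTM, (forgetLetters t).size = t.size by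
    induction w with
    | nil => rfl
    | cons x w ih => rw [Bmap, this, pmap_cons, BSTM.size_insert, ← this, ← Bmap, ih]; rfl
  intro t
  induction t with
  | leaf => rfl
  | node L x k R ihL ihR => simp [forgetLetters, BTM.size, BSTM.size, ihL, ihR]

theorem bmap_eq_leaf_iff {w : Word} : Bmap w = .leaf ↔ w = [] :=
  ⟨fun h => List.eq_nil_of_length_eq_zero (by rw [← size_bmap, h]; rfl), by rintro rfl; rfl⟩

theorem pmap_append_singleton (w : Word) (a : ℕ+) :
    Pmap (w ++ [a]) =
      .node (Pmap (w.filter (· < a))) a (w.count a).succPNat (Pmap (w.filter (a < ·))) := by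
  induction w with
  | nil => rfl
  | cons x w ih =>
    rw [List.cons_append, pmap_cons, ih]
    rcases lt_trichotomy x a with h | rfl | h
    · simp [BSTM.insert, h, h.ne, h.not_gt, pmap_cons]
    · simp [BSTM.insert]; rfl
    · simp [BSTM.insert, h, h.ne', h.not_gt, pmap_cons]

theorem map_add_map_sub_filter_lt (w : Word) (a : ℕ+) :
    ((w.filter (a < ·)).map (· - a)).map (· + a) = w.filter (a < ·) := by
  rw [List.map_map, List.map_congr_left (g := id), List.map_id]
  intro y hy
  exact PNat.sub_add_of_lt (by simpa using (List.mem_filter.mp hy).2)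

theorem bmap_append_singleton (w : Word) (a : ℕ+) :
    Bmap (w ++ [a]) = .node (Bmap (w.filter (· < a))) (w.count a).succPNat
      (Bmap ((w.filter (a < ·)).map (· - a))) := by
  rw [← bmap_map (f := (· + a)) (fun _ _ h => add_lt_add_left h a) ((w.filter (a < ·)).map (· - a)), map_add_map_sub_filter_lt, Bmap, pmap_append_singleton]
  rfl

def nextLetter (u : Word) : ℕ+ := (u.toFinset.sup PNat.val).succPNat

theorem IsPacked.lt_nextLetter_iff {u : Word} (hu : IsPacked u) {b : ℕ+} :
    b < nextLetter u ↔ b ∈ u := by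
  rw [nextLetter, ← PNat.coe_lt_coe, Nat.succPNat_coe, Nat.lt_succ_iff]
  refine ⟨fun hb => ?_, fun hb => Finset.le_sup (f := PNat.val) (List.mem_toFinset.mpr hb)⟩
  have hne : u.toFinset.Nonempty := by
    by_contra h
    rw [Finset.not_nonempty_iff_eq_empty.mp h, Finset.sup_empty] at hb
    exact b.ne_zero (Nat.le_zero.mp hb)
  obtain ⟨y, hy, hsup⟩ := Finset.exists_mem_eq_sup u.toFinset hne PNat.val
  exact hu y (List.mem_toFinset.mp hy) b ((PNat.coe_le_coe _ _).mp (hsup ▸ hb))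

theorem isPacked_filter_lt {w : Word} {a : ℕ+} (h : ∀ b < a, b ∈ w) :
    IsPacked (w.filter (· < a)) := by
  intro x hx b hb
  have hba : b < a := hb.trans_lt (by simpa using (List.mem_filter.mp hx).2)
  exact List.mem_filter.mpr ⟨h b hba, by simpa using hba⟩

theorem nextLetter_filter_lt {w : Word} {a : ℕ+} (h : ∀ b < a, b ∈ w) :
    nextLetter (w.filter (· < a)) = a :=
  eq_of_forall_lt_iff fun b => (isPacked_filter_lt h).lt_nextLetter_iff.trans <| by
    simpa using h b

theorem isPacked_append_singleton_iff {w : Word} {a : ℕ+} :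
    IsPacked (w ++ [a]) ↔ (∀ b < a, b ∈ w) ∧ IsPacked ((w.filter (a < ·)).map (· - a)) := by
  simp only [IsPacked, List.mem_append, List.mem_singleton, List.mem_map, List.mem_filter,
    decide_eq_true_eq]
  constructor
  · intro hp
    refine ⟨fun b hb => (hp a (Or.inr rfl) b hb.le).resolve_right hb.ne, ?_⟩
    rintro _ ⟨y, ⟨hy, hay⟩, rfl⟩ b hb
    have hba : b + a ≤ y := by
      rw [← PNat.sub_add_of_lt hay]
      exact add_le_add_left hb a
    have hab : a < b + a := PNat.lt_add_left a b
    exact ⟨b + a, ⟨(hp y (Or.inl hy) _ hba).resolve_right hab.ne', hab⟩, PNat.add_sub⟩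
  · rintro ⟨hlow, hhigh⟩ x hx b hbx
    rcases lt_trichotomy b a with h | rfl | h
    · exact Or.inl (hlow b h)
    · exact Or.inr rfl
    · have hax : a < x := h.trans_le hbx
      have hsub : b - a ≤ x - a := (add_le_add_iff_right a).mp <| by
        rwa [PNat.sub_add_of_lt h, PNat.sub_add_of_lt hax]
      obtain ⟨y, ⟨hy, hay⟩, hyb⟩ := hhigh _ ⟨x, ⟨hx.resolve_right hax.ne', hax⟩, rfl⟩ _ hsub
      rw [← PNat.sub_add_of_lt h, ← hyb, PNat.sub_add_of_lt hay]
      exact Or.inl hy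

def packedFiber (T : BTM) : Set Word := {w | IsPacked w ∧ Bmap w = T}

theorem packedFiber_leaf : packedFiber .leaf = {[]} := by
  ext w
  simp only [packedFiber, Set.mem_ofPred_eq, bmap_eq_leaf_iff, Set.mem_singleton_iff]
  exact ⟨And.right, fun h => ⟨fun x hx => by simp [h] at hx, h⟩⟩

theorem append_singleton_mem_packedFiber_node_iff {w : Word} {a : ℕ+} {L R : BTM} {k : ℕ+} :
    w ++ [a] ∈ packedFiber (.node L k R) ↔
      (∀ b < a, b ∈ w) ∧ w.filter (· < a) ∈ packedFiber L ∧ (w.count a).succPNat = k ∧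
        (w.filter (a < ·)).map (· - a) ∈ packedFiber R := by
  simp only [packedFiber, Set.mem_ofPred_eq, isPacked_append_singleton_iff, bmap_append_singleton,
    BTM.node.injEq]
  constructor
  · rintro ⟨⟨hlow, hv⟩, hL, hk, hR⟩
    exact ⟨hlow, ⟨isPacked_filter_lt hlow, hL⟩, hk, hv, hR⟩
  · rintro ⟨hlow, ⟨-, hL⟩, hk, hv, hR⟩
    exact ⟨⟨hlow, hv⟩, hL, hk, hR⟩

def rootSplit (w : Word) : List Ordering × Word × Word :=
  let a := w.getLastD 1
  let w' := w.dropLast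
  (w'.map (compare · a), w'.filter (· < a), (w'.filter (a < ·)).map (· - a))

def rootMerge (p : List Ordering × Word × Word) : Word :=
  let a := nextLetter p.2.1
  mergeAround a p.1 p.2.1 (p.2.2.map (· + a)) ++ [a]

theorem rootSplit_append_singleton (w : Word) (a : ℕ+) :
    rootSplit (w ++ [a]) =
      (w.map (compare · a), w.filter (· < a), (w.filter (a < ·)).map (· - a)) := by
  simp [rootSplit]

section RootBijection

variable {L R : BTM} {k : ℕ+}

theorem rootSplit_spec {w : Word} (hw : w ∈ packedFiber (.node L k R)) :
    rootSplit w ∈ listsWithCount (orderingCounts L.size ((k : ℕ) - 1) R.size) ×ˢ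
      packedFiber L ×ˢ packedFiber R ∧ rootMerge (rootSplit w) = w := by
  obtain ⟨w, a, rfl⟩ : ∃ w' a, w = w' ++ [a] := by
    have hne : w ≠ [] := by rintro rfl; simp [packedFiber, bmap_eq_leaf_iff.mpr] at hw
    exact ⟨w.dropLast, w.getLast hne, (List.dropLast_append_getLast hne).symm⟩
  obtain ⟨hlow, hL, hk, hR⟩ := append_singleton_mem_packedFiber_node_iff.mp hw
  obtain ⟨hclt, hceq, hcgt⟩ := count_map_compare a w
  rw [rootSplit_append_singleton]
  refine ⟨⟨fun o => ?_, hL, hR⟩, ?_⟩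
  · cases o
    · rw [hclt, ← size_bmap, hL.2]; rfl
    · rw [hceq, ← hk]; rfl
    · rw [hcgt, ← List.length_map (f := (· - a)), ← size_bmap, hR.2]; rfl
  · simp only [rootMerge]
    rw [nextLetter_filter_lt hlow, map_add_map_sub_filter_lt, mergeAround_map_compare_filter]

theorem rootMerge_spec {p : List Ordering × Word × Word}
    (hp : p ∈ listsWithCount (orderingCounts L.size ((k : ℕ) - 1) R.size) ×ˢ
      packedFiber L ×ˢ packedFiber R) :
    rootMerge p ∈ packedFiber (.node L k R) ∧ rootSplit (rootMerge p) = p := by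
  obtain ⟨c, u, v⟩ := p
  obtain ⟨hc, hu, hv⟩ := hp
  set a := nextLetter u
  obtain ⟨hmap, hlow, hhigh⟩ := mergeAround_spec (a := a) (c := c) (u := u) (v := v.map (· + a))
    (fun x hx => hu.1.lt_nextLetter_iff.mpr hx) (by simp [PNat.lt_add_left])
    (by rw [hc .lt, ← hu.2, size_bmap]; rfl) (by rw [hc .gt, ← hv.2, size_bmap, List.length_map]; rfl)
  have hvback : (v.map (· + a)).map (· - a) = v := by
    simp [List.map_map, Function.comp_def, PNat.add_sub]
  have hrm : rootMerge (c, u, v) = mergeAround a c u (v.map (· + a)) ++ [a] := rfl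
  rw [hrm]
  refine ⟨append_singleton_mem_packedFiber_node_iff.mpr ⟨fun b hb => ?_, ?_, ?_, ?_⟩, ?_⟩
  · have hbu := hu.1.lt_nextLetter_iff.mp hb
    rw [← hlow] at hbu
    exact (List.mem_filter.mp hbu).1
  · rwa [hlow]
  · apply PNat.eq
    rw [Nat.succPNat_coe, ← (count_map_compare a _).2.1, hmap, hc .eq]
    have := k.pos
    simp only [orderingCounts]
    omega
  · rwa [hhigh, hvback]
  · rw [rootSplit_append_singleton, hmap, hlow, hhigh, hvback]

theorem bijOn_rootSplit (L R : BTM) (k : ℕ+) :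
    Set.BijOn rootSplit (packedFiber (.node L k R))
      (listsWithCount (orderingCounts L.size ((k : ℕ) - 1) R.size) ×ˢ
        packedFiber L ×ˢ packedFiber R) :=
  Set.InvOn.bijOn ⟨fun _ hw => (rootSplit_spec hw).2, fun _ hp => (rootMerge_spec hp).2⟩
    (fun _ hw => (rootSplit_spec hw).1) (fun _ hp => (rootMerge_spec hp).1)

end RootBijection

theorem fT_eq_ncard_packedFiber (T : BTM) : fT T = (packedFiber T).ncard := rfl

theorem fT_leaf : fT .leaf = 1 := by
  rw [fT_eq_ncard_packedFiber, packedFiber_leaf, Set.ncard_singleton]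

theorem fT_node (L R : BTM) (k : ℕ+) :
    fT (.node L k R) =
      (listsWithCount (orderingCounts L.size ((k : ℕ) - 1) R.size)).ncard * (fT L * fT R) := by
  simp only [fT_eq_ncard_packedFiber]
  rw [(bijOn_rootSplit L R k).ncard_eq, Set.ncard_prod, Set.ncard_prod]

theorem fT_recursion :
    fT BTM.leaf = 1 ∧
      ∀ (L R : BTM) (k : ℕ+),
        (fT (BTM.node L k R) : ℚ) =
          ((((k : ℕ) + L.size + R.size - 1).factorial : ℚ) /
              ((((k : ℕ) - 1).factorial : ℚ) * (L.size.factorial : ℚ) *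
                (R.size.factorial : ℚ))) *
            (fT L : ℚ) * (fT R : ℚ) := by
  refine ⟨fT_leaf, fun L R k => ?_⟩
  have hcount := ncard_listsWithCount_mul_prod_factorial
    (orderingCounts L.size ((k : ℕ) - 1) R.size)
  simp only [Ordering.prod_univ, Ordering.sum_univ, orderingCounts] at hcount
  have hn : (k : ℕ) + L.size + R.size - 1 = L.size + ((k : ℕ) - 1) + R.size := by
    have := k.pos
    omega
  rw [fT_node, hn, ← hcount]
  push_cast
  field_simp
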